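/- In the quasi-consecutive pattern poset, suppose σ occurs precisely once in τ, the occurrence is not consecutive (the first entry of the occurrence is not adjacent in τ to the second), and the occurrence involves none of the first entry, second entry, and last entry of τ. Then μ(σ, τ) = 0. -/

import Mathlib

open scoped Classical

/-- A finite permutation of arbitrary length: a length `n` together with a
permutation of `Fin n` (in one-line notation, the entry at position `i` is
its value at `i`). -/
abbrev QPerm : Type := Σ n : ℕ, Equiv.Perm (Fin n)

/-- `IsOcc a σ τ f` : the strictly monotone position map `f` selects an
occurrence of the pattern `σ` in `τ` (order-isomorphically), where for every
gap index `j ≥ 1` (1-indexed) with `a j = false` the `j`-th and `(j+1)`-th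
selected positions must be adjacent in `τ`. -/
def IsOcc (a : ℕ → Bool) {k n : ℕ} (σ : Equiv.Perm (Fin k)) (τ : Equiv.Perm (Fin n))
    (f : Fin k → Fin n) : Prop :=
  StrictMono f ∧ (∀ i j : Fin k, σ i < σ j ↔ τ (f i) < τ (f j)) ∧
    ∀ (i : ℕ) (h : i + 1 < k), a (i + 1) = false →
      (f ⟨i + 1, h⟩ : ℕ) = (f ⟨i, Nat.lt_of_succ_lt h⟩ : ℕ) + 1

/-- `σ` occurs in `τ` as an `a`-vincular pattern. -/
def VOcc (a : ℕ → Bool) (σ τ : QPerm) : Prop :=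
  ∃ f : Fin σ.1 → Fin τ.1, IsOcc a σ.2 τ.2 f

/-- Covering relation of the `a`-vincular pattern poset. -/
def VCov (a : ℕ → Bool) (σ τ : QPerm) : Prop :=
  σ.1 + 1 = τ.1 ∧ VOcc a σ τ

/-- The `a`-vincular pattern order: reflexive-transitive closure of covering. -/
def VLe (a : ℕ → Bool) (σ τ : QPerm) : Prop :=
  Relation.ReflTransGen (VCov a) σ τ

/-- Occurrence as an `A`-vincular pattern for a matrix `A` (rows and columns
1-indexed via `A i j`); a pattern of length `k` uses row `k - 1`. -/
def MOcc (A : ℕ → ℕ → Bool) (σ τ : QPerm) : Prop :=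
  VOcc (fun j => A (σ.1 - 1) j) σ τ

/-- Covering relation of the `A`-vincular pattern poset. -/
def MCov (A : ℕ → ℕ → Bool) (σ τ : QPerm) : Prop :=
  σ.1 + 1 = τ.1 ∧ MOcc A σ τ

/-- The `A`-vincular pattern order. -/
def MLe (A : ℕ → ℕ → Bool) (σ τ : QPerm) : Prop :=
  Relation.ReflTransGen (MCov A) σ τ

/-- The quasi-consecutive adjacency vector `a = (1,0,0,…)` (1-indexed). -/
def qa : ℕ → Bool := fun j => decide (j = 1)

/-- Quasi-consecutive pattern occurrence. -/
def QOcc (σ τ : QPerm) : Prop := VOcc qa σ τ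

/-- Covering in the quasi-consecutive pattern poset. -/
def QCov (σ τ : QPerm) : Prop := VCov qa σ τ

/-- The quasi-consecutive pattern poset order. -/
def QLe (σ τ : QPerm) : Prop := VLe qa σ τ

/-- All permutations of length at most `n`, as a finset. -/
def permsUpTo (n : ℕ) : Finset QPerm :=
  (Finset.range (n + 1)).sigma fun _ => Finset.univ

/-- Möbius function of the quasi-consecutive pattern poset, computed with
fuel (the fuel `τ.1` always suffices, since lengths strictly increase along
the order). -/
noncomputable def qMuAux : ℕ → QPerm → QPerm → ℤ
  | 0, σ, τ => if σ = τ then 1 else 0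
  | m + 1, σ, τ =>
      if σ = τ then 1
      else -∑ z ∈ (permsUpTo τ.1).filter fun z => QLe σ z ∧ QLe z τ ∧ z ≠ τ,
            qMuAux m σ z

/-- The Möbius function of the quasi-consecutive pattern poset. -/
noncomputable def qMu (σ τ : QPerm) : ℤ := qMuAux τ.1 σ τ

/-- The interval `[σ, τ]` in the quasi-consecutive pattern poset. -/
def QInterval (σ τ : QPerm) : Set QPerm := {ρ | QLe σ ρ ∧ QLe ρ τ}

/-- The interval `[σ, τ]` is a chain. -/
def QChain (σ τ : QPerm) : Prop :=
  ∀ ρ₁ ρ₂ : QPerm, ρ₁ ∈ QInterval σ τ → ρ₂ ∈ QInterval σ τ → QLe ρ₁ ρ₂ ∨ QLe ρ₂ ρ₁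

/-- The interval `[σ, τ]` is order-isomorphic to the product of a chain with
`p + 1` elements and a chain with `q + 1` elements (componentwise order). -/
def IsGridInterval (σ τ : QPerm) (p q : ℕ) : Prop :=
  ∃ e : QInterval σ τ ≃ Fin (p + 1) × Fin (q + 1),
    ∀ ρ₁ ρ₂ : QInterval σ τ, QLe ρ₁.1 ρ₂.1 ↔ e ρ₁ ≤ e ρ₂

/-- The occurrence `f` involves position `i` (0-indexed) of the big permutation. -/
def Involves {k n : ℕ} (f : Fin k → Fin n) (i : ℕ) : Prop :=
  ∃ j : Fin k, (f j : ℕ) = i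

/-- The occurrence `f` is consecutive: all selected positions are adjacent. -/
def ConsecOcc {k n : ℕ} (f : Fin k → Fin n) : Prop :=
  ∀ (i : ℕ) (h : i + 1 < k),
    (f ⟨i + 1, h⟩ : ℕ) = (f ⟨i, Nat.lt_of_succ_lt h⟩ : ℕ) + 1

/-- The first two entries of `τ` are not consecutive integers. -/
def NotConsecFirstTwo (τ : QPerm) : Prop :=
  ∀ i j : Fin τ.1, (i : ℕ) = 0 → (j : ℕ) = 1 →
    (τ.2 i : ℕ) + 1 ≠ (τ.2 j : ℕ) ∧ (τ.2 j : ℕ) + 1 ≠ (τ.2 i : ℕ)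

/-- `τ` is a monotone (increasing or decreasing) permutation. -/
def IsMonotonePerm (τ : QPerm) : Prop :=
  (∀ i j : Fin τ.1, i < j → τ.2 i < τ.2 j) ∨ (∀ i j : Fin τ.1, i < j → τ.2 j < τ.2 i)

/-!
Let `A` be `τ` with its first entry deleted. It is a lower cover of `τ`, `σ ≤ A` because the
occurrence avoids the first entry, and `σ ≠ A` because the occurrence `Fin.succ` of `A` in `τ` is
consecutive. Splitting `μ(σ, τ) = -∑_{σ ≤ z < τ} μ(σ, z)` according to whether `z ≤ A`, the terms
with `z ≤ A` add up to `0`. If `z ≰ A`, every occurrence of `z` in `τ` uses the first entry, so the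
unique occurrence of `σ` in `τ` factors through `z` as an occurrence that is again unique, avoids
the first entry and is not consecutive; hence `μ(σ, z) = 0` by induction on the length of `τ`.

That `≤` is just "occurs in" comes from the fact that an occurrence in a longer permutation misses
its first, second or last entry, and deleting one of these entries is a cover.
-/

open Function

lemma Fin.val_succAbove {m : ℕ} (p : Fin (m + 1)) (i : Fin m) :
    (p.succAbove i : ℕ) = if (i : ℕ) < p then (i : ℕ) else (i : ℕ) + 1 := by
  unfold Fin.succAbove
  split_ifs <;> simp_all [Fin.lt_def]

lemma Fin.val_eq_add_one_of_succAbove {m : ℕ} {p : Fin (m + 1)} {i j : Fin m}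
    (h : (p.succAbove j : ℕ) = p.succAbove i + 1) : (j : ℕ) = i + 1 := by
  rw [Fin.val_succAbove, Fin.val_succAbove] at h
  split_ifs at h <;> omega

lemma Fin.val_succAbove_add_one {m : ℕ} {p : Fin (m + 1)} (hp : (p : ℕ) ≤ 1 ∨ p = Fin.last m)
    {i : ℕ} (hi : 1 ≤ i) (h : i + 1 < m) :
    (p.succAbove ⟨i + 1, h⟩ : ℕ) = p.succAbove ⟨i, by omega⟩ + 1 := by
  have hp' : (p : ℕ) ≤ 1 ∨ (p : ℕ) = m := hp.imp_right fun h => by simp [h]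
  rw [Fin.val_succAbove, Fin.val_succAbove]
  split_ifs <;> simp only at * <;> omega

section Pattern

variable {α : Type*} [LinearOrder α] {m : ℕ}

/-- `(Tuple.sort v)⁻¹ i` is the rank of `v i` among the entries of `v`. -/
def patternOf (v : Fin m → α) : Equiv.Perm (Fin m) := (Tuple.sort v)⁻¹

lemma patternOf_lt_patternOf_iff {v : Fin m → α} (hv : Injective v) (i j : Fin m) :
    patternOf v i < patternOf v j ↔ v i < v j := by
  have hmono : StrictMono (v ∘ Tuple.sort v) :=
    (Tuple.monotone_sort v).strictMono_of_injective (hv.comp (Tuple.sort v).injective)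
  simpa [patternOf] using (hmono.lt_iff_lt (a := (Tuple.sort v)⁻¹ i) (b := (Tuple.sort v)⁻¹ j)).symm

end Pattern

lemma Equiv.Perm.eq_of_lt_iff_lt {k : ℕ} {p q : Equiv.Perm (Fin k)}
    (h : ∀ i j, p i < p j ↔ q i < q j) : p = q := by
  have hmono : StrictMono (q ∘ p.symm) := fun x y hxy => (h _ _).1 (by simpa using hxy)
  ext i
  simpa using congrArg Fin.val (hmono.apply_eq (x := p i)).symm

section Occurrence

variable {k l n : ℕ} {p : Equiv.Perm (Fin k)} {q : Equiv.Perm (Fin l)}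
  {t : Equiv.Perm (Fin n)}

lemma isOcc_id (a : ℕ → Bool) (p : Equiv.Perm (Fin k)) : IsOcc a p p id :=
  ⟨strictMono_id, fun _ _ => Iff.rfl, fun _ _ _ => rfl⟩

lemma IsOcc.length_le {a : ℕ → Bool} {g : Fin k → Fin n} (hg : IsOcc a p t g) : k ≤ n :=
  Fin.le_of_injective g hg.1.injective

lemma IsOcc.val_succ {g : Fin k → Fin n} (hg : IsOcc qa p t g) {i : ℕ} (hi : 1 ≤ i)
    (h : i + 1 < k) : (g ⟨i + 1, h⟩ : ℕ) = g ⟨i, by omega⟩ + 1 :=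
  hg.2.2 i h (by simp only [qa, decide_eq_false_iff_not]; omega)

lemma IsOcc.comp {f : Fin k → Fin l} {g : Fin l → Fin n} (hf : IsOcc qa p q f)
    (hg : IsOcc qa q t g) : IsOcc qa p t (g ∘ f) := by
  refine ⟨hg.1.comp hf.1, fun i j => (hf.2.1 i j).trans (hg.2.1 _ _), fun i h ha => ?_⟩
  have hi : 1 ≤ i := by simp only [qa, decide_eq_false_iff_not] at ha; omega
  have hfi : 1 ≤ (f ⟨i, by omega⟩ : ℕ) := by
    have h0i := hf.1 (show (⟨0, by omega⟩ : Fin k) < ⟨i, by omega⟩ from Fin.lt_def.2 hi)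
    rw [Fin.lt_def] at h0i
    omega
  have hstep : f ⟨i + 1, h⟩ = ⟨f ⟨i, by omega⟩ + 1, hf.2.2 i h ha ▸ (f ⟨i + 1, h⟩).2⟩ :=
    Fin.ext (hf.2.2 i h ha)
  simp only [comp_apply, hstep]
  exact hg.val_succ hfi _

lemma IsOcc.val_eq_add {g : Fin k → Fin n} (hg : IsOcc qa p t g) (hk : 1 < k) (j : Fin k)
    (hj : 1 ≤ (j : ℕ)) : (g j : ℕ) = g ⟨1, hk⟩ + (j - 1) := by
  obtain ⟨j, hjk⟩ := j
  induction j with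
  | zero => simp at hj
  | succ j ih =>
    rcases Nat.eq_zero_or_pos j with rfl | hj0
    · rfl
    · simp only at ih ⊢
      rw [hg.val_succ hj0 hjk, ih (by omega) hj0]
      omega

end Occurrence

section Deletion

variable {k m : ℕ} {p : Equiv.Perm (Fin k)} {t : Equiv.Perm (Fin (m + 1))} {q : Fin (m + 1)}

lemma IsOcc.of_comp_succAbove {a : ℕ → Bool} {h : Fin k → Fin m}
    (hg : IsOcc a p t (q.succAbove ∘ h)) : IsOcc a p (patternOf (t ∘ q.succAbove)) h := by
  refine ⟨fun i j hij => (Fin.strictMono_succAbove q).lt_iff_lt.1 (hg.1 hij), fun i j => ?_,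
    fun i hi ha => Fin.val_eq_add_one_of_succAbove (hg.2.2 i hi ha)⟩
  rw [hg.2.1, patternOf_lt_patternOf_iff (t.injective.comp Fin.succAbove_right_injective)]
  rfl

lemma isOcc_succAbove (t : Equiv.Perm (Fin (m + 1))) (hq : (q : ℕ) ≤ 1 ∨ q = Fin.last m) :
    IsOcc qa (patternOf (t ∘ q.succAbove)) t q.succAbove :=
  ⟨Fin.strictMono_succAbove q,
    patternOf_lt_patternOf_iff (t.injective.comp Fin.succAbove_right_injective),
    fun _ h ha => Fin.val_succAbove_add_one hq
      (by simp only [qa, decide_eq_false_iff_not] at ha; omega) h⟩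

lemma IsOcc.exists_avoided {g : Fin k → Fin (m + 1)} (hg : IsOcc qa p t g) (hkm : k ≤ m) :
    ∃ q : Fin (m + 1), ((q : ℕ) ≤ 1 ∨ q = Fin.last m) ∧ ∀ j, g j ≠ q := by
  by_cases h₀ : ∀ j, g j ≠ 0
  · exact ⟨0, Or.inl (by simp), h₀⟩
  by_cases hₗ : ∀ j, g j ≠ Fin.last m
  · exact ⟨Fin.last m, Or.inr rfl, hₗ⟩
  push Not at h₀ hₗ
  obtain ⟨j₀, hj₀⟩ := h₀
  obtain ⟨jₗ, hjₗ⟩ := hₗ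
  refine ⟨⟨1, by have := j₀.2; omega⟩, Or.inl le_rfl, fun j hj => ?_⟩
  have hpos : ∀ i, g i ≠ 0 → 1 ≤ (i : ℕ) := fun i hi => by
    by_contra! hi0
    have := hg.1.monotone (Fin.le_def.2 (show (i : ℕ) ≤ j₀ by omega))
    rw [hj₀] at this
    exact hi (le_antisymm this (Fin.zero_le _))
  have hk : 1 < k := by have := hpos j (by simp [hj, Fin.ext_iff]); omega
  have h01 : (g ⟨0, by omega⟩ : ℕ) < g ⟨1, hk⟩ := hg.1 (Fin.lt_def.2 one_pos)
  have hgj := hg.val_eq_add hk j (hpos j (by simp [hj, Fin.ext_iff]))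
  have hgjₗ := hg.val_eq_add hk jₗ (hpos jₗ (by simp [hjₗ, Fin.ext_iff]; omega))
  rw [hj] at hgj
  rw [hjₗ, Fin.val_last] at hgjₗ
  have := jₗ.2
  simp only at hgj
  omega

noncomputable def deleteEntry (t : Equiv.Perm (Fin (m + 1))) (q : Fin (m + 1)) : QPerm :=
  ⟨m, patternOf (t ∘ q.succAbove)⟩

lemma IsOcc.qOcc_of_avoids {g : Fin k → Fin (m + 1)} (hg : IsOcc qa p t g) (hq : ∀ j, g j ≠ q) :
    QOcc ⟨k, p⟩ (deleteEntry t q) := by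
  choose h hh using fun j => Fin.exists_succAbove_eq (hq j)
  obtain rfl : g = q.succAbove ∘ h := funext fun j => (hh j).symm
  exact ⟨h, hg.of_comp_succAbove⟩

lemma qCov_deleteEntry (t : Equiv.Perm (Fin (m + 1))) (hq : (q : ℕ) ≤ 1 ∨ q = Fin.last m) :
    QCov (deleteEntry t q) ⟨m + 1, t⟩ :=
  ⟨rfl, q.succAbove, isOcc_succAbove t hq⟩

end Deletion

section Order

variable {σ ρ τ : QPerm}

lemma QLe.refl (σ : QPerm) : QLe σ σ := Relation.ReflTransGen.refl

lemma QLe.trans (h₁ : QLe σ ρ) (h₂ : QLe ρ τ) : QLe σ τ := Relation.ReflTransGen.trans h₁ h₂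

lemma QLe.tail (h : QLe σ ρ) (hc : QCov ρ τ) : QLe σ τ := Relation.ReflTransGen.tail h hc

lemma QLe.length_le (h : QLe σ τ) : σ.1 ≤ τ.1 := by
  induction h with
  | refl => rfl
  | tail _ hc ih => exact ih.trans (hc.1 ▸ Nat.le_succ _)

lemma QLe.length_lt (h : QLe σ τ) (hne : σ ≠ τ) : σ.1 < τ.1 := by
  rcases Relation.ReflTransGen.cases_tail h with rfl | ⟨ρ, hσρ, hc⟩
  · exact absurd rfl hne
  · exact hc.1 ▸ Nat.lt_succ_of_le (QLe.length_le hσρ)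

lemma QLe.qOcc (h : QLe σ τ) : QOcc σ τ := by
  induction h with
  | refl => exact ⟨id, isOcc_id qa _⟩
  | tail _ hc ih =>
    obtain ⟨f, hf⟩ := ih
    obtain ⟨g, hg⟩ := hc.2
    exact ⟨g ∘ f, hf.comp hg⟩

lemma QOcc.eq_of_length_eq (h : QOcc σ τ) (hl : σ.1 = τ.1) : σ = τ := by
  obtain ⟨k, p⟩ := σ
  obtain ⟨n, t⟩ := τ
  obtain rfl : k = n := hl
  obtain ⟨f, hf⟩ := h
  obtain rfl : f = id := hf.1.eq_id
  rw [Equiv.Perm.eq_of_lt_iff_lt (p := p) (q := t) hf.2.1]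

lemma QOcc.qLe (h : QOcc σ τ) : QLe σ τ := by
  induction τ using (measure fun ρ : QPerm => ρ.1).wf.induction generalizing σ with
  | h τ ih =>
    obtain ⟨g, hg⟩ := h
    rcases hg.length_le.eq_or_lt with hl | hl
    · exact QOcc.eq_of_length_eq ⟨g, hg⟩ hl ▸ QLe.refl σ
    obtain ⟨k, p⟩ := σ
    obtain ⟨n, t⟩ := τ
    change k < n at hl
    obtain ⟨m, rfl⟩ : ∃ m, n = m + 1 := ⟨n - 1, by omega⟩
    obtain ⟨q, hq, hav⟩ := hg.exists_avoided (Nat.le_of_lt_succ hl)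
    exact (ih _ (Nat.lt_succ_self m) (hg.qOcc_of_avoids hav)).tail (qCov_deleteEntry t hq)

end Order

section Mobius

/-- The index set of the sum in `qMuAux`. -/
noncomputable def qIco (σ ρ : QPerm) : Finset QPerm :=
  (permsUpTo ρ.1).filter fun z => QLe σ z ∧ QLe z ρ ∧ z ≠ ρ

noncomputable def qIcc (σ ρ : QPerm) : Finset QPerm :=
  (permsUpTo ρ.1).filter fun z => QLe σ z ∧ QLe z ρ

variable {σ ρ τ z : QPerm}

lemma mem_permsUpTo {n : ℕ} : z ∈ permsUpTo n ↔ z.1 ≤ n := by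
  simp [permsUpTo]

lemma mem_qIco : z ∈ qIco σ ρ ↔ QLe σ z ∧ QLe z ρ ∧ z ≠ ρ := by
  simp only [qIco, Finset.mem_filter, mem_permsUpTo, and_iff_right_iff_imp]
  exact fun h => h.2.1.length_le

lemma mem_qIcc : z ∈ qIcc σ ρ ↔ QLe σ z ∧ QLe z ρ := by
  simp only [qIcc, Finset.mem_filter, mem_permsUpTo, and_iff_right_iff_imp]
  exact fun h => h.2.length_le

lemma qMuAux_succ {m : ℕ} (h : z.1 ≤ m) : qMuAux (m + 1) σ z = qMuAux m σ z := by
  induction m generalizing z with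
  | zero =>
    have hempty : qIco σ z = ∅ := Finset.eq_empty_of_forall_notMem fun w hw => by
      have := (mem_qIco.1 hw).2.1.length_lt (mem_qIco.1 hw).2.2
      omega
    simp only [qMuAux]
    split_ifs
    · rfl
    · rw [show (permsUpTo z.1).filter _ = qIco σ z from rfl, hempty, Finset.sum_empty, neg_zero]
  | succ m ih =>
    simp only [qMuAux]
    split_ifs
    · rfl
    · congr 1
      refine Finset.sum_congr rfl fun w hw => ih ?_
      have := (mem_qIco.1 hw).2.1.length_lt (mem_qIco.1 hw).2.2
      omega

lemma qMuAux_eq_qMu {m : ℕ} (h : z.1 ≤ m) : qMuAux m σ z = qMu σ z := by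
  induction m, h using Nat.le_induction with
  | base => rfl
  | succ m hm ih => rw [qMuAux_succ hm, ih]

lemma qMu_eq_neg_sum (h : σ ≠ ρ) : qMu σ ρ = -∑ z ∈ qIco σ ρ, qMu σ z := by
  rw [← qMuAux_eq_qMu (Nat.le_succ ρ.1)]
  simp only [qMuAux, if_neg h]
  congr 1
  refine Finset.sum_congr rfl fun z hz => qMuAux_eq_qMu ?_
  exact ((mem_qIco.1 hz).2.1.length_lt (mem_qIco.1 hz).2.2).le

lemma sum_qIcc_qMu (h : σ ≠ ρ) : ∑ z ∈ qIcc σ ρ, qMu σ z = 0 := by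
  by_cases hσρ : QLe σ ρ
  · have hinsert : qIcc σ ρ = insert ρ (qIco σ ρ) := by
      ext z
      simp only [Finset.mem_insert, mem_qIcc, mem_qIco]
      constructor
      · rintro ⟨hσz, hzρ⟩
        exact (eq_or_ne z ρ).imp_right fun hne => ⟨hσz, hzρ, hne⟩
      · rintro (rfl | ⟨hσz, hzρ, -⟩)
        exacts [⟨hσρ, QLe.refl z⟩, ⟨hσz, hzρ⟩]
    rw [hinsert, Finset.sum_insert (by simp [mem_qIco]), qMu_eq_neg_sum h, neg_add_cancel]
  · exact Finset.sum_eq_zero fun z hz => absurd ((mem_qIcc.1 hz).1.trans (mem_qIcc.1 hz).2) hσρ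

/-- The part of `[σ, τ)` below `A` contributes `∑_{[σ, A]} μ(σ, ·) = 0`. -/
lemma qMu_eq_zero_of_qCov {A : QPerm} (hA : QCov A τ) (hσA : QLe σ A) (hne : σ ≠ A)
    (h : ∀ z, QLe σ z → QLe z τ → z ≠ τ → ¬ QLe z A → qMu σ z = 0) : qMu σ τ = 0 := by
  have hστ : σ ≠ τ := by
    rintro rfl
    have := hσA.length_le
    have := hA.1
    omega
  have hbelow : (qIco σ τ).filter (fun z => QLe z A) = qIcc σ A := by
    ext z
    simp only [Finset.mem_filter, mem_qIco, mem_qIcc]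
    constructor
    · rintro ⟨⟨hσz, -, -⟩, hzA⟩
      exact ⟨hσz, hzA⟩
    · rintro ⟨hσz, hzA⟩
      refine ⟨⟨hσz, hzA.tail hA, ?_⟩, hzA⟩
      rintro rfl
      have := hzA.length_le
      have := hA.1
      omega
  rw [qMu_eq_neg_sum hστ, ← Finset.sum_filter_add_sum_filter_not (qIco σ τ) (fun z => QLe z A),
    hbelow, sum_qIcc_qMu hne, Finset.sum_eq_zero, add_zero, neg_zero]
  intro z hz
  simp only [Finset.mem_filter, mem_qIco] at hz
  exact h z hz.1.1 hz.1.2.1 hz.1.2.2 hz.2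

end Mobius

/-- Every occurrence of `z` in `τ` uses the first entry, and the unique occurrence of `σ` in `τ`
factors through it. -/
lemma exists_occ_of_not_qLe_deleteEntry_zero {σ z : QPerm} {m : ℕ} {t : Equiv.Perm (Fin (m + 1))}
    {f : Fin σ.1 → Fin (m + 1)} (huniq : ∀ g, IsOcc qa σ.2 t g → g = f)
    (hnc : ∀ i j : Fin σ.1, (i : ℕ) = 0 → (j : ℕ) = 1 → (f j : ℕ) ≠ (f i : ℕ) + 1)
    (hf0 : ∀ j, f j ≠ 0) (hσz : QLe σ z) (hzτ : QLe z ⟨m + 1, t⟩)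
    (hzA : ¬ QLe z (deleteEntry t 0)) :
    ∃ fz : Fin σ.1 → Fin z.1, IsOcc qa σ.2 z.2 fz ∧ (∀ g, IsOcc qa σ.2 z.2 g → g = fz) ∧
      (∀ i j : Fin σ.1, (i : ℕ) = 0 → (j : ℕ) = 1 → (fz j : ℕ) ≠ (fz i : ℕ) + 1) ∧
      ¬ Involves fz 0 := by
  obtain ⟨g, hg⟩ := hzτ.qOcc
  obtain ⟨fz, hfz⟩ := hσz.qOcc
  obtain ⟨j₀, hj₀⟩ : ∃ j₀, g j₀ = 0 := by
    by_contra! hav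
    exact hzA (hg.qOcc_of_avoids hav).qLe
  have hcomp : g ∘ fz = f := huniq _ (hfz.comp hg)
  have hfz0 : ∀ j, (fz j : ℕ) ≠ 0 := fun j hj => hf0 j <| by
    have := hg.1.monotone (Fin.le_def.2 (show (fz j : ℕ) ≤ j₀ by omega))
    rw [← hcomp, comp_apply]
    exact le_antisymm (hj₀ ▸ this) (Fin.zero_le _)
  refine ⟨fz, hfz, fun g' hg' => ?_, fun i j hi hj hij => hnc i j hi hj ?_,
    fun ⟨j, hj⟩ => hfz0 j hj⟩
  · exact hg.1.injective.comp_left ((huniq _ (hg'.comp hg)).trans hcomp.symm)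
  have hadj := hg.val_succ (Nat.one_le_iff_ne_zero.2 (hfz0 i)) (hij ▸ (fz j).2)
  rw [← hcomp, comp_apply, comp_apply, show fz j = ⟨fz i + 1, hij ▸ (fz j).2⟩ from Fin.ext hij,
    hadj]

theorem unique_occurrence_none_nonconsecutive_general (σ τ : QPerm)
    (hk : 1 < σ.1)
    (f : Fin σ.1 → Fin τ.1) (hf : IsOcc qa σ.2 τ.2 f)
    (huniq : ∀ g : Fin σ.1 → Fin τ.1, IsOcc qa σ.2 τ.2 g → g = f)
    (hnc : ∀ i j : Fin σ.1, (i : ℕ) = 0 → (j : ℕ) = 1 →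
      (f j : ℕ) ≠ (f i : ℕ) + 1)
    (h0 : ¬ Involves f 0) :
    qMu σ τ = 0 := by
  induction τ using (measure fun ρ : QPerm => ρ.1).wf.induction with
  | h τ ih =>
    obtain ⟨n, t⟩ := τ
    obtain ⟨m, rfl⟩ : ∃ m, n = m + 1 :=
      ⟨n - 1, by have : (f ⟨0, by omega⟩ : ℕ) < n := (f _).2; omega⟩
    have hf0 : ∀ j, f j ≠ 0 := fun j hj => h0 ⟨j, by simp [hj]⟩
    have hfirst : ((0 : Fin (m + 1)) : ℕ) ≤ 1 ∨ 0 = Fin.last m := Or.inl zero_le_one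
    refine qMu_eq_zero_of_qCov (qCov_deleteEntry t hfirst) (hf.qOcc_of_avoids hf0).qLe ?_
      fun z hσz hzτ hzτ' hzA => ?_
    · rintro rfl
      have hsucc : f = Fin.succAbove 0 := (huniq _ (isOcc_succAbove t hfirst)).symm
      exact hnc ⟨0, by omega⟩ ⟨1, hk⟩ rfl rfl (by rw [hsucc]; rfl)
    · obtain ⟨fz, hfz, hfz_uniq, hfz_nc, hfz0⟩ :=
        exists_occ_of_not_qLe_deleteEntry_zero huniq hnc hf0 hσz hzτ hzA
      exact ih z (hzτ.length_lt hzτ') fz hfz hfz_uniq hfz_nc hfz0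

/-- If `σ` occurs precisely once in `τ`, the occurrence is not consecutive
(the first two entries of the occurrence are not adjacent in `τ`), and the
occurrence involves none of the first, second, and last entries of `τ`,
then `μ(σ,τ) = 0`. -/
theorem unique_occurrence_none_nonconsecutive (σ τ : QPerm) (hle : QLe σ τ)
    (hk : 1 < σ.1)
    (f : Fin σ.1 → Fin τ.1) (hf : IsOcc qa σ.2 τ.2 f)
    (huniq : ∀ g : Fin σ.1 → Fin τ.1, IsOcc qa σ.2 τ.2 g → g = f)
    (hnc : ∀ i j : Fin σ.1, (i : ℕ) = 0 → (j : ℕ) = 1 →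
      (f j : ℕ) ≠ (f i : ℕ) + 1)
    (h0 : ¬ Involves f 0) (h1 : ¬ Involves f 1) (hn : ¬ Involves f (τ.1 - 1)) :
    qMu σ τ = 0 :=
  unique_occurrence_none_nonconsecutive_general σ τ hk f hf huniq hnc h0
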